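/- Let A_1,…,A_r, B_1,…,B_r be p-subsets of [n] that are pairwise disjoint within each family (|A_u ∩ A_v| = |B_u ∩ B_v| = 0 for u ≠ v), with |A_u ∩ B_u| = s_u and Σ_u |A_u △ B_u| = p, and let C = ⊔_u (A_u △ B_u). Then for x uniform in [k]^n, E[ (Π_{u=1}^r f(x_{A_u}) f(x_{B_u})) · f(x_C) ] = k · Π_{u=1}^r g(s_u), where g(s) = a^{2p−s} + 2(k−1) a^{p−s} b^p + (k−1) a^s b^{2(p−s)} + (k−1)(k−2) b^{2p−s} with a = (k−1)/k² and b = −1/k². -/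

import Mathlib

/-!
Write `φ_i(v) = 1_{v=i} − 1/k`, so that `f(x_S) = ∑_i ∏_{j ∈ S} φ_i(x_j)`. Expanding every factor,
the integrand is a sum, over colour pairs `I u = (i, i')` for the blocks and a colour `i₀` for `C`,
of products of `φ`'s in which each coordinate of `A_u ∪ B_u` carries exactly two colours: `(i, i')`
on `A_u ∩ B_u`, `(i, i₀)` on `A_u \ B_u` and `(i', i₀)` on `B_u \ A_u`. The coordinates of `x` are
independent, so each product has expectation `∏_j E[φ_{c}(x_j) φ_{c'}(x_j)]`, and this correlation
is `a` if `c = c'` and `b` otherwise. Summing over the colour pair of a block gives `g(s_u)` for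
every `i₀`, and the `k` choices of `i₀` give the factor `k`.
-/

open Finset

/-- `f(x_S) = ∑_{i=1}^k ∏_{j ∈ S} (1_{x_j=i} − 1/k)`. -/
noncomputable def fSet (k n : ℕ) (S : Finset (Fin n)) (x : Fin n → Fin k) : ℝ :=
  ∑ i : Fin k, ∏ j ∈ S, ((if x j = i then (1 : ℝ) else 0) - 1 / (k : ℝ))

/-- `g(s) = a^{2p−s} + 2(k−1)a^{p−s}b^p + (k−1)a^s b^{2(p−s)} + (k−1)(k−2)b^{2p−s}`
with `a = (k−1)/k²`, `b = −1/k²`. -/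
noncomputable def gfun (k p s : ℕ) : ℝ :=
  (((k : ℝ) - 1) / (k : ℝ) ^ 2) ^ (2 * p - s)
    + 2 * ((k : ℝ) - 1) * (((k : ℝ) - 1) / (k : ℝ) ^ 2) ^ (p - s) * (-1 / (k : ℝ) ^ 2) ^ p
    + ((k : ℝ) - 1) * (((k : ℝ) - 1) / (k : ℝ) ^ 2) ^ s * (-1 / (k : ℝ) ^ 2) ^ (2 * (p - s))
    + ((k : ℝ) - 1) * ((k : ℝ) - 2) * (-1 / (k : ℝ) ^ 2) ^ (2 * p - s)

section ProdUnion

variable {α M : Type*} [DecidableEq α] [CommMonoid M]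

theorem prod_union_ite_mem_ite_mem (A B : Finset α) (f g h : α → M) :
    ∏ j ∈ A ∪ B, (if j ∈ A then (if j ∈ B then f j else g j) else h j)
      = (∏ j ∈ A ∩ B, f j) * (∏ j ∈ A \ B, g j) * ∏ j ∈ B \ A, h j := by
  rw [← union_sdiff_self_eq_union, prod_union disjoint_sdiff, ← prod_inter_mul_prod_sdiff A B]
  refine congr_arg₂ (· * ·) (congr_arg₂ (· * ·) ?_ ?_) ?_ <;>
    exact prod_congr rfl fun j hj => by simp_all

theorem prod_mul_prod_mul_prod_symmDiff (A B : Finset α) (f g h : α → M) :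
    (∏ j ∈ A, f j) * (∏ j ∈ B, g j) * ∏ j ∈ symmDiff A B, h j
      = ∏ j ∈ A ∪ B,
          (if j ∈ A then (if j ∈ B then f j * g j else f j * h j) else g j * h j) := by
  rw [prod_union_ite_mem_ite_mem, prod_mul_distrib, prod_mul_distrib, prod_mul_distrib,
    ← prod_inter_mul_prod_sdiff A B f, ← prod_inter_mul_prod_sdiff B A g, inter_comm B A,
    symmDiff_def, sup_eq_union, prod_union disjoint_sdiff_sdiff]
  ac_rfl

end ProdUnion

section Expectation

variable {β γ ι : Type*} [Fintype β] [DecidableEq β] [Fintype γ] [Nonempty γ]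

theorem sum_prod_prod_div_card_pow (T : Finset ι) (S : ι → Finset β)
    (hS : (T : Set ι).PairwiseDisjoint S) (w : ι → β → γ → ℝ) :
    (∑ x : β → γ, ∏ t ∈ T, ∏ j ∈ S t, w t j (x j)) / (Fintype.card γ : ℝ) ^ Fintype.card β
      = ∏ t ∈ T, ∏ j ∈ S t, (∑ v, w t j v) / Fintype.card γ := by
  have hcard : (Fintype.card γ : ℝ) ≠ 0 := by positivity
  have hspread : ∀ g : ι → β → ℝ, ∏ t ∈ T, ∏ j ∈ S t, g t j
      = ∏ j, ∏ t ∈ T, if j ∈ S t then g t j else 1 := by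
    intro g
    rw [prod_comm]
    simp only [prod_ite_mem, univ_inter]
  have hcoord : ∀ j, (∑ v, ∏ t ∈ T, if j ∈ S t then w t j v else 1) / Fintype.card γ
      = ∏ t ∈ T, if j ∈ S t then (∑ v, w t j v) / Fintype.card γ else 1 := by
    intro j
    by_cases hj : ∃ t ∈ T, j ∈ S t
    · obtain ⟨t, ht, hjt⟩ := hj
      have hother : ∀ t' ∈ T, t' ≠ t → j ∉ S t' := fun t' ht' hne hjt' =>
        disjoint_left.mp (hS ht' ht hne) hjt' hjt
      rw [prod_eq_single_of_mem t ht fun t' ht' hne => if_neg (hother t' ht' hne), if_pos hjt]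
      congr 1
      refine sum_congr rfl fun v _ => ?_
      rw [prod_eq_single_of_mem t ht fun t' ht' hne => if_neg (hother t' ht' hne), if_pos hjt]
    · push Not at hj
      simp only [prod_ite_of_false hj]
      simp [hcard]
  simp_rw [hspread (fun t j => w t j _), hspread (fun t j => (∑ v, w t j v) / _)]
  rw [← Fintype.prod_sum fun j v => ∏ t ∈ T, if j ∈ S t then w t j v else 1,
    ← card_univ (α := β), ← prod_const, ← prod_div_distrib]
  exact prod_congr rfl fun j _ => hcoord j

end Expectation

section Counting

variable {α R : Type*} [Fintype α] [CommRing R]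

theorem Fintype.sum_eq_add_card_sub_one_mul {f : α → R} {c : R} (i : α)
    (hf : ∀ v, v ≠ i → f v = c) :
    ∑ v, f v = f i + ((Fintype.card α : R) - 1) * c := by
  have hzero : ∑ v, (f v - c) = f i - c :=
    Fintype.sum_eq_single i fun v hv => sub_eq_zero.mpr (hf v hv)
  rw [sum_sub_distrib, sum_const, card_univ, nsmul_eq_mul] at hzero
  linear_combination hzero

theorem Fintype.sum_eq_add_add_card_sub_two_mul {f : α → R} {c : R} {i i' : α} (hii' : i ≠ i')
    (hf : ∀ v, v ≠ i ∧ v ≠ i' → f v = c) :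
    ∑ v, f v = f i + f i' + ((Fintype.card α : R) - 2) * c := by
  have hzero : ∑ v, (f v - c) = (f i - c) + (f i' - c) :=
    Fintype.sum_eq_add i i' hii' fun v hv => sub_eq_zero.mpr (hf v hv)
  rw [sum_sub_distrib, sum_const, card_univ, nsmul_eq_mul] at hzero
  linear_combination hzero

variable [DecidableEq α]

theorem sum_ite_pow_mul_ite_pow (a b : R) (s t : ℕ) (i i' : α) :
    ∑ v, (if i = v then a else b) ^ s * (if v = i' then a else b) ^ t
      = if i = i' then a ^ (s + t) + ((Fintype.card α : R) - 1) * b ^ (s + t)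
        else a ^ s * b ^ t + b ^ s * a ^ t + ((Fintype.card α : R) - 2) * b ^ (s + t) := by
  split_ifs with hii'
  · subst hii'
    rw [Fintype.sum_eq_add_card_sub_one_mul (c := b ^ (s + t)) i fun v hv => by
      simp [hv, Ne.symm hv, pow_add]]
    simp [pow_add]
  · rw [Fintype.sum_eq_add_add_card_sub_two_mul (c := b ^ (s + t)) hii' fun v hv => by
      simp [hv.2, Ne.symm hv.1, pow_add]]
    simp [hii']

theorem sum_ite_pow_mul_ite_pow_mul_ite_pow (a b : R) (s t : ℕ) (i₀ : α) :
    ∑ q : α × α, (if q.1 = q.2 then a else b) ^ s * (if q.1 = i₀ then a else b) ^ t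
        * (if q.2 = i₀ then a else b) ^ t
      = a ^ (s + 2 * t) + 2 * ((Fintype.card α : R) - 1) * a ^ t * b ^ (s + t)
        + ((Fintype.card α : R) - 1) * a ^ s * b ^ (2 * t)
        + ((Fintype.card α : R) - 1) * ((Fintype.card α : R) - 2) * b ^ (s + 2 * t) := by
  have hinner : ∀ i, ∑ v, (if i = v then a else b) ^ s * (if i = i₀ then a else b) ^ t
      * (if v = i₀ then a else b) ^ t
      = (if i = i₀ then a else b) ^ t * ∑ v, (if i = v then a else b) ^ s
          * (if v = i₀ then a else b) ^ t := by
    intro i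
    rw [mul_sum]
    exact sum_congr rfl fun v _ => by ring
  rw [Fintype.sum_prod_type]
  simp_rw [hinner, sum_ite_pow_mul_ite_pow]
  rw [Fintype.sum_eq_add_card_sub_one_mul i₀ fun v hv => by simp only [hv, if_false]; rfl]
  simp only [if_true]
  ring

end Counting

noncomputable def centeredIndicator (k : ℕ) (i v : Fin k) : ℝ :=
  (if v = i then 1 else 0) - 1 / (k : ℝ)

noncomputable def centeredCorr (k : ℕ) (i i' : Fin k) : ℝ :=
  if i = i' then ((k : ℝ) - 1) / (k : ℝ) ^ 2 else -1 / (k : ℝ) ^ 2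

theorem fSet_eq_sum_prod_centeredIndicator {k n : ℕ} (S : Finset (Fin n)) (x : Fin n → Fin k) :
    fSet k n S x = ∑ i, ∏ j ∈ S, centeredIndicator k i (x j) :=
  rfl

theorem sum_centeredIndicator_mul_div {k : ℕ} [NeZero k] (i i' : Fin k) :
    (∑ v, centeredIndicator k i v * centeredIndicator k i' v) / k = centeredCorr k i i' := by
  have hk : (k : ℝ) ≠ 0 := NeZero.ne _
  rw [centeredCorr, div_eq_iff hk]
  split_ifs with hii'
  · subst hii'
    rw [Fintype.sum_eq_add_card_sub_one_mul (c := (1 / (k : ℝ)) ^ 2) i fun v hv => by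
      simp only [centeredIndicator, hv, if_false]; ring]
    simp only [centeredIndicator, if_true, Fintype.card_fin]
    field_simp
    ring
  · rw [Fintype.sum_eq_add_add_card_sub_two_mul (c := (1 / (k : ℝ)) ^ 2) hii' fun v hv => by
      simp only [centeredIndicator, hv.1, hv.2, if_false]; ring]
    simp only [centeredIndicator, if_true, hii', Ne.symm hii', if_false, Fintype.card_fin]
    field_simp
    ring

section Blocks

variable {k n : ℕ}

noncomputable def blockTerm (A B : Finset (Fin n)) (i i' i₀ : Fin k) (j : Fin n) (v : Fin k) : ℝ :=
  if j ∈ A then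
    (if j ∈ B then centeredIndicator k i v * centeredIndicator k i' v
      else centeredIndicator k i v * centeredIndicator k i₀ v)
  else centeredIndicator k i' v * centeredIndicator k i₀ v

theorem fSet_mul_fSet_mul_prod_symmDiff (A B : Finset (Fin n)) (i₀ : Fin k) (x : Fin n → Fin k) :
    fSet k n A x * fSet k n B x * ∏ j ∈ symmDiff A B, centeredIndicator k i₀ (x j)
      = ∑ q : Fin k × Fin k, ∏ j ∈ A ∪ B, blockTerm A B q.1 q.2 i₀ j (x j) := by
  rw [fSet_eq_sum_prod_centeredIndicator, fSet_eq_sum_prod_centeredIndicator, sum_mul_sum]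
  simp_rw [sum_mul]
  rw [← Fintype.sum_prod_type']
  exact sum_congr rfl fun q _ => prod_mul_prod_mul_prod_symmDiff A B _ _ _

theorem prod_blockTerm_div [NeZero k] (A B : Finset (Fin n)) (i i' i₀ : Fin k) :
    ∏ j ∈ A ∪ B, (∑ v, blockTerm A B i i' i₀ j v) / k
      = centeredCorr k i i' ^ #(A ∩ B) * centeredCorr k i i₀ ^ #(A \ B)
          * centeredCorr k i' i₀ ^ #(B \ A) := by
  have hterm : ∀ j, (∑ v, blockTerm A B i i' i₀ j v) / k
      = if j ∈ A then (if j ∈ B then centeredCorr k i i' else centeredCorr k i i₀)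
        else centeredCorr k i' i₀ := by
    intro j
    simp only [blockTerm]
    split_ifs <;> exact sum_centeredIndicator_mul_div _ _
  simp_rw [hterm, prod_union_ite_mem_ite_mem, prod_const]

end Blocks

theorem sum_centeredCorr_pow_eq_gfun {k p s : ℕ} (hsp : s ≤ p) (i₀ : Fin k) :
    ∑ q : Fin k × Fin k, centeredCorr k q.1 q.2 ^ s * centeredCorr k q.1 i₀ ^ (p - s)
        * centeredCorr k q.2 i₀ ^ (p - s) = gfun k p s := by
  obtain ⟨t, rfl⟩ := Nat.exists_eq_add_of_le hsp
  have h2 : 2 * (s + t) - s = s + 2 * t := by omega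
  simp only [centeredCorr, sum_ite_pow_mul_ite_pow_mul_ite_pow, Fintype.card_fin, gfun,
    Nat.add_sub_cancel_left, h2]

theorem prod_fSet_mul_fSet_biUnion_symmDiff {k n r : ℕ} (A B : Fin r → Finset (Fin n))
    (hd : ((univ : Finset (Fin r)) : Set (Fin r)).PairwiseDisjoint fun u => symmDiff (A u) (B u))
    (x : Fin n → Fin k) :
    (∏ u, fSet k n (A u) x * fSet k n (B u) x)
        * fSet k n (univ.biUnion fun u => symmDiff (A u) (B u)) x
      = ∑ i₀, ∑ I : Fin r → Fin k × Fin k,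
          ∏ u, ∏ j ∈ A u ∪ B u, blockTerm (A u) (B u) (I u).1 (I u).2 i₀ j (x j) := by
  rw [fSet_eq_sum_prod_centeredIndicator, mul_sum]
  refine sum_congr rfl fun i₀ _ => ?_
  rw [prod_biUnion hd, ← prod_mul_distrib]
  simp_rw [fSet_mul_fSet_mul_prod_symmDiff]
  exact Fintype.prod_sum _

theorem stmt12_general (k p n r : ℕ) (hk : 2 ≤ k)
    (A B : Fin r → Finset (Fin n)) (s : Fin r → ℕ)
    (hA : ∀ u, (A u).card = p) (hB : ∀ u, (B u).card = p)
    (hAd : ∀ u v, u ≠ v → Disjoint (A u) (A v))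
    (hBd : ∀ u v, u ≠ v → Disjoint (B u) (B v))
    (hABd : ∀ u v, u ≠ v → Disjoint (A u) (B v))
    (hs : ∀ u, (A u ∩ B u).card = s u) :
    (∑ x : Fin n → Fin k,
        (∏ u : Fin r, fSet k n (A u) x * fSet k n (B u) x) *
          fSet k n (Finset.univ.biUnion fun u => symmDiff (A u) (B u)) x) / (k : ℝ) ^ n
      = (k : ℝ) * ∏ u : Fin r, gfun k p (s u) := by
  have : NeZero k := ⟨by omega⟩
  have hblocks : ((univ : Finset (Fin r)) : Set (Fin r)).PairwiseDisjoint fun u => A u ∪ B u :=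
    fun u _ v _ huv => disjoint_union_left.mpr
      ⟨disjoint_union_right.mpr ⟨hAd u v huv, hABd u v huv⟩,
        disjoint_union_right.mpr ⟨(hABd v u huv.symm).symm, hBd u v huv⟩⟩
  have hsdiff : ∀ u, #(A u \ B u) = p - s u ∧ #(B u \ A u) = p - s u := fun u => by
    have hAB := card_sdiff_add_card_inter (A u) (B u)
    have hBA := card_sdiff_add_card_inter (B u) (A u)
    rw [hs u, hA u] at hAB
    rw [inter_comm, hs u, hB u] at hBA
    omega
  have hsp : ∀ u, s u ≤ p := fun u => hs u ▸ hA u ▸ card_le_card inter_subset_left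
  calc _ = ∑ i₀ : Fin k, ∑ I : Fin r → Fin k × Fin k, ∏ u, ∏ j ∈ A u ∪ B u,
          (∑ v, blockTerm (A u) (B u) (I u).1 (I u).2 i₀ j v) / k := by
        simp_rw [prod_fSet_mul_fSet_biUnion_symmDiff A B (hblocks.mono fun u => symmDiff_le_sup)]
        rw [sum_comm, sum_div]
        refine sum_congr rfl fun i₀ _ => ?_
        rw [sum_comm, sum_div]
        refine sum_congr rfl fun I _ => ?_
        simpa using sum_prod_prod_div_card_pow univ _ hblocks
          fun u j => blockTerm (A u) (B u) (I u).1 (I u).2 i₀ j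
    _ = ∑ i₀ : Fin k, ∏ u, ∑ q : Fin k × Fin k, centeredCorr k q.1 q.2 ^ s u
          * centeredCorr k q.1 i₀ ^ (p - s u) * centeredCorr k q.2 i₀ ^ (p - s u) := by
        simp_rw [prod_blockTerm_div, hs, hsdiff, Fintype.prod_sum]
    _ = _ := by
        simp_rw [sum_centeredCorr_pow_eq_gfun (hsp _), sum_const, card_univ, Fintype.card_fin,
          nsmul_eq_mul]

/-- Moment computation for products of `f` over blocks:
`E_x[(∏_u f(x_{A_u}) f(x_{B_u})) f(x_C)] = k ∏_u g(s_u)` where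
`C = ⊔_u (A_u △ B_u)`. -/
theorem stmt12 (k p n r : ℕ) (hk : 2 ≤ k) (hp : 2 ≤ p)
    (A B : Fin r → Finset (Fin n)) (s : Fin r → ℕ)
    (hA : ∀ u, (A u).card = p) (hB : ∀ u, (B u).card = p)
    (hAd : ∀ u v, u ≠ v → Disjoint (A u) (A v))
    (hBd : ∀ u v, u ≠ v → Disjoint (B u) (B v))
    (hABd : ∀ u v, u ≠ v → Disjoint (A u) (B v))
    (hs : ∀ u, (A u ∩ B u).card = s u)
    (hsum : ∑ u : Fin r, (symmDiff (A u) (B u)).card = p) :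
    (∑ x : Fin n → Fin k,
        (∏ u : Fin r, fSet k n (A u) x * fSet k n (B u) x) *
          fSet k n (Finset.univ.biUnion fun u => symmDiff (A u) (B u)) x) / (k : ℝ) ^ n
      = (k : ℝ) * ∏ u : Fin r, gfun k p (s u) :=
  stmt12_general k p n r hk A B s hA hB hAd hBd hABd hs
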